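/- arXiv:1710.11186 — 5 statements merged into one kernel-verified Lean document; each statement's English description precedes it below -/
import Mathlib

section
/- Every separable metric space X contains a subset S that is dense in X, is a Gδ set (a countable intersection of open sets), and has Hausdorff dimension zero. -/
open Encodable Filter Metric MeasureTheory Set Topology
open scoped ENNReal

/-!
Put a ball of radius `2⁻¹ ^ ((k + 1) * (n + k + 1) + 1)` around the `n`-th point of a countable
dense set. For each `k` the union `U k` of these balls is open and contains the dense set, so
`⋂ k, U k` is a dense `Gδ`. Once `d ≥ 1 / (k + 1)`, the `d`-th powers of the diameters of the
balls making up `U k` sum to at most `2⁻¹ ^ k`; hence `μH[d] (⋂ k, U k) = 0` for every `d > 0`.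
-/

theorem ENNReal.pow_mul_rpow_le_pow {a : ℝ≥0∞} (ha : a ≤ 1) {j m : ℕ} {d : ℝ}
    (hjd : 1 ≤ j * d) : (a ^ (j * m)) ^ d ≤ a ^ m := by
  calc (a ^ (j * m)) ^ d = a ^ ((m : ℝ) * (j * d)) := by
        rw [← ENNReal.rpow_natCast, ← ENNReal.rpow_mul]
        push_cast
        ring_nf
    _ ≤ a ^ (m : ℝ) :=
        ENNReal.rpow_le_rpow_of_exponent_ge ha (le_mul_of_one_le_right m.cast_nonneg hjd)
    _ = a ^ m := ENNReal.rpow_natCast a m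

theorem ENNReal.tsum_inv_two_pow_add_succ (k : ℕ) :
    ∑' n : ℕ, (2⁻¹ : ℝ≥0∞) ^ (n + (k + 1)) = 2⁻¹ ^ k := by
  simp only [pow_add, ENNReal.tsum_mul_right, ENNReal.tsum_geometric_two, pow_succ]
  rw [mul_left_comm, ENNReal.mul_inv_cancel two_ne_zero ENNReal.ofNat_ne_top, mul_one]

section SmallBalls

variable {X ι : Type*} [EMetricSpace X] [Encodable ι]

noncomputable def smallBallRadius (k n : ℕ) : ℝ≥0∞ := 2⁻¹ ^ ((k + 1) * (n + (k + 1)) + 1)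

theorem smallBallRadius_pos (k n : ℕ) : 0 < smallBallRadius k n :=
  ENNReal.pow_pos (by simp) _

theorem ediam_eball_smallBallRadius_le (y : X) (k n : ℕ) :
    ediam (eball y (smallBallRadius k n)) ≤ 2⁻¹ ^ ((k + 1) * (n + (k + 1))) :=
  calc ediam (eball y (smallBallRadius k n)) ≤ 2 * smallBallRadius k n := ediam_eball_le
    _ = 2⁻¹ ^ ((k + 1) * (n + (k + 1))) := by
      rw [smallBallRadius, pow_succ, mul_left_comm,
        ENNReal.mul_inv_cancel two_ne_zero ENNReal.ofNat_ne_top, mul_one]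

def smallBallsGδ (x : ι → X) : Set X :=
  ⋂ k : ℕ, ⋃ i, eball (x i) (smallBallRadius k (encode i))

theorem range_subset_smallBallsGδ (x : ι → X) : range x ⊆ smallBallsGδ x := by
  rintro _ ⟨i, rfl⟩
  exact mem_iInter.2 fun k => mem_iUnion.2 ⟨i, mem_eball_self (smallBallRadius_pos _ _)⟩

theorem isGδ_smallBallsGδ (x : ι → X) : IsGδ (smallBallsGδ x) :=
  .iInter fun _ => (isOpen_iUnion fun _ => isOpen_eball).isGδ

theorem tsum_ediam_eball_smallBallRadius_rpow_le (x : ι → X) {k : ℕ} {d : ℝ}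
    (hkd : 1 ≤ (k + 1 : ℕ) * d) :
    ∑' i, ediam (eball (x i) (smallBallRadius k (encode i))) ^ d ≤ 2⁻¹ ^ k := by
  have hd : 0 ≤ d := nonneg_of_mul_nonneg_right (zero_le_one.trans hkd) (by positivity)
  calc ∑' i, ediam (eball (x i) (smallBallRadius k (encode i))) ^ d
      ≤ ∑' i, (2⁻¹ : ℝ≥0∞) ^ (encode i + (k + 1)) := ENNReal.tsum_le_tsum fun i =>
        (ENNReal.rpow_le_rpow (ediam_eball_smallBallRadius_le _ _ _) hd).trans
          (ENNReal.pow_mul_rpow_le_pow (ENNReal.inv_le_one.2 one_le_two) hkd)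
    _ ≤ ∑' n : ℕ, (2⁻¹ : ℝ≥0∞) ^ (n + (k + 1)) :=
        ENNReal.tsum_comp_le_tsum_of_injective encode_injective _
    _ = 2⁻¹ ^ k := ENNReal.tsum_inv_two_pow_add_succ k

theorem hausdorffMeasure_smallBallsGδ [MeasurableSpace X] [BorelSpace X] (x : ι → X) {d : ℝ}
    (hd : 0 < d) : μH[d] (smallBallsGδ x) = 0 := by
  have h_geom : Tendsto (fun k : ℕ => (2⁻¹ : ℝ≥0∞) ^ k) atTop (𝓝 0) :=
    ENNReal.tendsto_pow_atTop_nhds_zero_of_lt_one (ENNReal.inv_lt_one.2 ENNReal.one_lt_two)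
  have h_exp : ∀ᶠ k : ℕ in atTop, 1 ≤ ((k + 1 : ℕ) : ℝ) * d :=
    ((tendsto_natCast_atTop_atTop.comp (tendsto_add_atTop_nat 1)).atTop_mul_const hd
      ).eventually_ge_atTop 1
  have h_diam : ∀ k : ℕ, ∀ i : ι, ediam (eball (x i) (smallBallRadius k (encode i))) ≤ 2⁻¹ ^ k :=
    fun k i => (ediam_eball_smallBallRadius_le _ _ _).trans
      (pow_le_pow_of_le_one zero_le (ENNReal.inv_le_one.2 one_le_two)
        ((Nat.le_succ k).trans (Nat.le_mul_of_pos_right _ (by omega))))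
  refine le_antisymm ?_ zero_le
  calc μH[d] (smallBallsGδ x)
      ≤ liminf (fun k => ∑' i, ediam (eball (x i) (smallBallRadius k (encode i))) ^ d) atTop :=
        Measure.hausdorffMeasure_le_liminf_tsum d _ _ h_geom _ (.of_forall h_diam)
          (.of_forall fun k => iInter_subset _ k)
    _ ≤ liminf (fun k => (2⁻¹ : ℝ≥0∞) ^ k) atTop :=
        liminf_le_liminf (h_exp.mono fun k => tsum_ediam_eball_smallBallRadius_rpow_le x)
    _ = 0 := h_geom.liminf_eq

theorem dimH_smallBallsGδ (x : ι → X) : dimH (smallBallsGδ x) = 0 := by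
  borelize X
  refine nonpos_iff_eq_zero.1 (dimH_le fun d hd => ?_)
  contrapose! hd
  rw [hausdorffMeasure_smallBallsGδ x (by simpa using hd)]
  exact ENNReal.zero_ne_top

end SmallBalls

/-- Every separable metric space contains a dense `Gδ` subset of
Hausdorff dimension zero. -/
theorem dense_Gdelta_dimH_zero (X : Type*) [MetricSpace X]
    [TopologicalSpace.SeparableSpace X] :
    ∃ S : Set X, Dense S ∧ IsGδ S ∧ dimH S = 0 := by
  obtain ⟨s, hs_countable, hs_dense⟩ := TopologicalSpace.exists_countable_dense X
  have := hs_countable.toEncodable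
  refine ⟨smallBallsGδ ((↑) : s → X), hs_dense.mono ?_, isGδ_smallBallsGδ _, dimH_smallBallsGδ _⟩
  simpa using range_subset_smallBallsGδ ((↑) : s → X)
end

section
/- Let X be a metric space, let c > 0 and ρ ∈ (0,1), and let f : {0,1}^ℕ → X be a map such that for all distinct β, β′ ∈ {0,1}^ℕ, d(f(β), f(β′)) ≥ c · ρ^{m(β,β′)}, where m(β,β′) is the least n ∈ ℕ with β(n) ≠ β′(n). Then the Hausdorff dimension of the range of f is at least log 2 / log(1/ρ). -/
open Set
open scoped NNReal

/-!
Binary expansion maps Cantor space onto `[0, 1]`, and two sequences first differing at index `n`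
are sent to points at distance at most `2⁻¹ ^ n = (ρ ^ n) ^ r`, where `r = log 2 / log (1 / ρ)`.
By the separation hypothesis this is at most `(dist (f β) (f β') / c) ^ r`, so the expansion
factors through `range f` by an `r`-Hölder map. Such maps divide Hausdorff dimension by at most
`r`, whence `1 = dimH [0, 1] ≤ dimH (range f) / r`.
-/

theorem HolderOnWith.of_dist_le_mul {X Y : Type*} [PseudoMetricSpace X] [PseudoMetricSpace Y]
    {C : ℝ} {r : ℝ≥0} {φ : X → Y} {s : Set X}
    (h : ∀ x ∈ s, ∀ y ∈ s, dist (φ x) (φ y) ≤ C * dist x y ^ (r : ℝ)) :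
    HolderOnWith C.toNNReal r φ s := by
  intro x hx y hy
  rw [edist_dist, edist_dist, ENNReal.ofReal_rpow_of_nonneg dist_nonneg r.coe_nonneg]
  change _ ≤ ENNReal.ofReal C * _
  rw [← ENNReal.ofReal_mul' (by positivity)]
  exact ENNReal.ofReal_le_ofReal (h x hx y hy)

/-- `g` factors through `f` on `range f` (it is constant on fibres of `f` because `0 < r`). -/
theorem dimH_range_le_of_dist_le_rpow {α X Y : Type*} [MetricSpace X] [MetricSpace Y]
    {f : α → X} {g : α → Y} {C r : ℝ} (hr : 0 < r)
    (h : ∀ a b, dist (g a) (g b) ≤ C * dist (f a) (f b) ^ r) :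
    dimH (range g) ≤ dimH (range f) / ENNReal.ofReal r := by
  cases isEmpty_or_nonempty α
  · simp [range_eq_empty]
  set φ : X → Y := fun x => g (Function.invFun f x)
  have hφ : HolderOnWith C.toNNReal r.toNNReal φ (range f) := by
    refine HolderOnWith.of_dist_le_mul ?_
    rintro _ ⟨a, rfl⟩ _ ⟨b, rfl⟩
    simpa only [φ, Function.invFun_eq ⟨a, rfl⟩, Function.invFun_eq ⟨b, rfl⟩,
      Real.coe_toNNReal r hr.le] using h (Function.invFun f (f a)) (Function.invFun f (f b))
  have hrange : range g ⊆ φ '' range f := by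
    rintro _ ⟨a, rfl⟩
    refine ⟨f a, mem_range_self a, dist_le_zero.1 ?_⟩
    simpa [φ, Function.invFun_eq ⟨a, rfl⟩, Real.zero_rpow hr.ne'] using
      h (Function.invFun f (f a)) a
  exact (dimH_mono hrange).trans (hφ.dimH_image_le (Real.toNNReal_pos.2 hr))

namespace Real

theorem one_le_dimH_range_ofDigits_comp {ι : Type*} {b : ℕ} (hb : 1 < b) (e : ι ≃ Fin b) :
    1 ≤ dimH (range fun β : ℕ → ι => ofDigits (e ∘ β)) := by
  have hsub : Icc (0 : ℝ) 1 ⊆ range fun β : ℕ → ι => ofDigits (e ∘ β) := by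
    intro y hy
    obtain ⟨δ, -, rfl⟩ := ofDigits_SurjOn hb hy
    exact ⟨e.symm ∘ δ, by simp [Function.comp_def]⟩
  have hIcc : dimH (Icc (0 : ℝ) 1) = 1 := by
    rw [Real.dimH_of_nonempty_interior (by simp), Module.finrank_self, Nat.cast_one]
  exact hIcc.ge.trans (dimH_mono hsub)

theorem dist_ofDigits_le_of_separated {ι X : Type*} [PseudoMetricSpace X] {b : ℕ}
    (e : ι ≃ Fin b) {c ρ r : ℝ} (hc : 0 < c) (hρ : 0 < ρ) (hr : 0 ≤ r) (hρr : ρ ^ r = (b : ℝ)⁻¹)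
    {f : (ℕ → ι) → X}
    (hsep : ∀ β β' : ℕ → ι, ∀ n : ℕ, β n ≠ β' n → (∀ m < n, β m = β' m) →
      c * ρ ^ n ≤ dist (f β) (f β'))
    (β β' : ℕ → ι) :
    dist (ofDigits (e ∘ β)) (ofDigits (e ∘ β')) ≤ c⁻¹ ^ r * dist (f β) (f β') ^ r := by
  rcases eq_or_ne β β' with rfl | hne
  · simp only [dist_self]; positivity
  set n := PiNat.firstDiff β β'
  have hdigits : dist (ofDigits (e ∘ β)) (ofDigits (e ∘ β')) ≤ ((b : ℝ) ^ n)⁻¹ :=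
    abs_ofDigits_sub_ofDigits_le fun i hi => by
      simp [PiNat.apply_eq_of_lt_firstDiff hi]
  have hscale : ((b : ℝ) ^ n)⁻¹ = c⁻¹ ^ r * (c * ρ ^ n) ^ r := by
    rw [← Real.mul_rpow (by positivity) (by positivity), inv_mul_cancel_left₀ hc.ne',
      ← Real.rpow_pow_comm hρ.le, hρr, inv_pow]
  calc dist (ofDigits (e ∘ β)) (ofDigits (e ∘ β')) ≤ ((b : ℝ) ^ n)⁻¹ := hdigits
    _ = c⁻¹ ^ r * (c * ρ ^ n) ^ r := hscale
    _ ≤ c⁻¹ ^ r * dist (f β) (f β') ^ r := by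
      have := hsep β β' n (PiNat.apply_firstDiff_ne hne) fun m hm =>
        PiNat.apply_eq_of_lt_firstDiff hm
      gcongr

end Real

/-- If `f : {0,1}^ℕ → X` satisfies the separation condition
`dist (f β) (f β') ≥ c ρ^{m(β,β')}` (with `m(β,β')` the first index where `β, β'` differ),
then the range of `f` has Hausdorff dimension at least `log 2 / log (1/ρ)`. -/
theorem dimH_of_separated_cantor_family {X : Type*} [MetricSpace X]
    (c ρ : ℝ) (hc : 0 < c) (hρ : ρ ∈ Set.Ioo (0 : ℝ) 1)
    (f : (ℕ → Bool) → X)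
    (hsep : ∀ β β' : ℕ → Bool, ∀ n : ℕ, β n ≠ β' n → (∀ m < n, β m = β' m) →
      c * ρ ^ n ≤ dist (f β) (f β')) :
    ENNReal.ofReal (Real.log 2 / Real.log (1 / ρ)) ≤ dimH (Set.range f) := by
  obtain ⟨hρ0, hρ1⟩ := hρ
  set r := Real.log 2 / Real.log (1 / ρ)
  have hr : 0 < r := div_pos (Real.log_pos one_lt_two) (Real.log_pos (one_lt_one_div hρ0 hρ1))
  have hρr : ρ ^ r = ((2 : ℕ) : ℝ)⁻¹ := by
    have : r = Real.logb ρ 2⁻¹ := by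
      simp only [r, Real.logb, one_div, Real.log_inv, div_neg, neg_div]
    rw [this, Real.rpow_logb hρ0 hρ1.ne (by norm_num), Nat.cast_ofNat]
  have hdigits := Real.dist_ofDigits_le_of_separated finTwoEquiv.symm hc hρ0 hr.le hρr hsep
  have hone := (Real.one_le_dimH_range_ofDigits_comp one_lt_two finTwoEquiv.symm).trans
    (dimH_range_le_of_dist_le_rpow hr hdigits)
  rwa [ENNReal.le_div_iff_mul_le (by simp [hr]) (by simp), one_mul] at hone
end

section
/- Let d ≥ 1 and L ≥ 1 be integers. Let χ : ℝ^d → ℝ be measurable with ∫_{ℝ^d} (1 + |h|)^L |χ(h)| dh < ∞, ∫_{ℝ^d} χ(h) dh = 1, and ∫_{ℝ^d} h^a χ(h) dh = 0 for every multi-index a with 1 ≤ |a| ≤ L − 1. Then for every bounded function F : ℝ^d → ℝ of class C^L with bounded derivatives up to order L, sup_{x ∈ ℝ^d} | (χ ∗ F)(x) − F(x) | ≤ (1/L!) · ( sup_x ‖D^L F(x)‖ ) · ∫_{ℝ^d} |h|^L |χ(h)| dh, where D^L F denotes the L-th (Fréchet) derivative of F and ‖·‖ its operator norm. -/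
/-!
Expand `F (x - h)` by Taylor's formula of order `L - 1` at `x`. Against `χ`, the terms of degree
`1, …, L - 1` integrate to zero (a `k`-linear form evaluated on the diagonal is a combination of
monomials of degree `k`) and the constant term integrates to `F x` because `∫ χ = 1`. What is left
of `(χ ∗ F)(x) - F(x)` is the integral of the Taylor remainder against `χ`, and the integral form
of the remainder bounds it by `sup ‖D^L F‖ · |h|^L / L!`.
-/

open MeasureTheory Finset
open scoped Nat

section Taylor

variable {E G : Type*} [NormedAddCommGroup E] [NormedSpace ℝ E]
  [NormedAddCommGroup G] [NormedSpace ℝ G]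

noncomputable def taylorPolynomial (f : E → G) (x : E) (n : ℕ) (y : E) : G :=
  ∑ k ∈ range (n + 1), (k ! : ℝ)⁻¹ • iteratedFDeriv ℝ k f x (fun _ ↦ y)

lemma integral_one_sub_pow (n : ℕ) : ∫ t in (0 : ℝ)..1, (1 - t) ^ n = 1 / (n + 1) := by
  simp [intervalIntegral.integral_comp_sub_left (fun t : ℝ ↦ t ^ n)]

theorem norm_sub_taylorPolynomial_le [CompleteSpace G] {f : E → G} {n : ℕ}
    (hf : ContDiff ℝ (n + 1) f) {M : ℝ} (hM : ∀ z, ‖iteratedFDeriv ℝ (n + 1) f z‖ ≤ M)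
    (x y : E) :
    ‖f (x + y) - taylorPolynomial f x n y‖ ≤ M * ‖y‖ ^ (n + 1) / (n + 1)! := by
  have hremainder : ‖∫ t in (0 : ℝ)..1,
      (1 - t) ^ n • iteratedFDeriv ℝ (n + 1) f (x + t • y) (fun _ ↦ y)‖
        ≤ ∫ t in (0 : ℝ)..1, (1 - t) ^ n * (M * ‖y‖ ^ (n + 1)) := by
    refine intervalIntegral.norm_integral_le_of_norm_le zero_le_one
      (ae_of_all _ fun t ht ↦ ?_) ((by fun_prop : Continuous _).intervalIntegrable _ _)
    have hpow : 0 ≤ (1 - t) ^ n := pow_nonneg (by linarith [ht.2]) n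
    rw [norm_smul, Real.norm_of_nonneg hpow]
    gcongr
    simpa using ((iteratedFDeriv ℝ (n + 1) f (x + t • y)).le_of_opNorm_le (hM _)) fun _ ↦ y
  rw [map_add_eq_sum_add_integral_iteratedFDeriv fun t _ ↦ hf.contDiffAt, taylorPolynomial,
    add_sub_cancel_left, norm_smul, Real.norm_of_nonneg (by positivity)]
  calc (n ! : ℝ)⁻¹ * ‖_‖
      ≤ (n ! : ℝ)⁻¹ * ∫ t in (0 : ℝ)..1, (1 - t) ^ n * (M * ‖y‖ ^ (n + 1)) := by gcongr
    _ = M * ‖y‖ ^ (n + 1) / (n + 1)! := by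
        rw [intervalIntegral.integral_mul_const, integral_one_sub_pow, Nat.factorial_succ]
        push_cast
        field_simp

end Taylor

section PolynomialWeight

variable {E : Type*} [NormedAddCommGroup E] {L : ℕ}

lemma norm_pow_le_one_add_norm_pow (h : E) {k : ℕ} (hk : k ≤ L) :
    ‖h‖ ^ k ≤ (1 + ‖h‖) ^ L :=
  (pow_le_pow_left₀ (norm_nonneg h) (by linarith [norm_nonneg h]) k).trans
    (pow_le_pow_right₀ (by linarith [norm_nonneg h]) hk)

variable [MeasurableSpace E] {μ : Measure E} {χ : E → ℝ}

lemma integrable_mul_of_abs_le_mul_one_add_norm_pow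
    (hχ : Integrable (fun h ↦ (1 + ‖h‖) ^ L * |χ h|) μ) (hχm : AEStronglyMeasurable χ μ)
    {g : E → ℝ} (hg : AEStronglyMeasurable g μ) {C : ℝ}
    (hgC : ∀ h, |g h| ≤ C * (1 + ‖h‖) ^ L) :
    Integrable (fun h ↦ g h * χ h) μ :=
  (hχ.const_mul C).mono' (hg.mul hχm) <| ae_of_all _ fun h ↦ by
    rw [Real.norm_eq_abs, abs_mul, ← mul_assoc]
    exact mul_le_mul_of_nonneg_right (hgC h) (abs_nonneg _)

variable [NormedSpace ℝ E] [OpensMeasurableSpace E]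

lemma integrable_multilinear_apply_const_mul
    (hχ : Integrable (fun h ↦ (1 + ‖h‖) ^ L * |χ h|) μ) (hχm : AEStronglyMeasurable χ μ)
    {k : ℕ} (hk : k ≤ L) (m : ContinuousMultilinearMap ℝ (fun _ : Fin k ↦ E) ℝ) :
    Integrable (fun h ↦ m (fun _ ↦ h) * χ h) μ := by
  refine integrable_mul_of_abs_le_mul_one_add_norm_pow hχ hχm
    (by fun_prop : Continuous fun h ↦ m (fun _ ↦ h)).aestronglyMeasurable (C := ‖m‖)
    fun h ↦ ?_
  calc |m (fun _ ↦ h)| ≤ ‖m‖ * ‖h‖ ^ k := by simpa using m.le_opNorm fun _ ↦ h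
    _ ≤ ‖m‖ * (1 + ‖h‖) ^ L := by gcongr; exact norm_pow_le_one_add_norm_pow h hk

lemma integrable_iteratedFDeriv_apply_neg_mul
    (hχ : Integrable (fun h ↦ (1 + ‖h‖) ^ L * |χ h|) μ) (hχm : AEStronglyMeasurable χ μ)
    (f : E → ℝ) (x : E) {k : ℕ} (hk : k ≤ L) :
    Integrable (fun h ↦ iteratedFDeriv ℝ k f x (fun _ ↦ -h) * χ h) μ :=
  integrable_multilinear_apply_const_mul hχ hχm hk
    ((iteratedFDeriv ℝ k f x).compContinuousLinearMap fun _ ↦ -ContinuousLinearMap.id ℝ E)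

lemma integrable_taylorPolynomial_neg_mul {n : ℕ}
    (hχ : Integrable (fun h ↦ (1 + ‖h‖) ^ (n + 1) * |χ h|) μ) (hχm : AEStronglyMeasurable χ μ)
    (f : E → ℝ) (x : E) :
    Integrable (fun h ↦ taylorPolynomial f x n (-h) * χ h) μ := by
  simp_rw [taylorPolynomial, sum_mul, smul_eq_mul, mul_assoc]
  exact integrable_finsetSum _ fun k hk ↦
    (integrable_iteratedFDeriv_apply_neg_mul hχ hχm f x (mem_range.1 hk).le).const_mul _

end PolynomialWeight

section Moments

variable {d : ℕ} {μ : Measure (Fin d → ℝ)}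

lemma prod_comp_eq_prod_pow_card {k : ℕ} (r : Fin k → Fin d) (h : Fin d → ℝ) :
    ∏ j, h (r j) = ∏ i, h i ^ #{j | r j = i} := by
  simp [← prod_fiberwise' univ r h]

lemma multilinear_apply_const_eq_sum_monomial {k : ℕ}
    (m : ContinuousMultilinearMap ℝ (fun _ : Fin k ↦ Fin d → ℝ) ℝ) (h : Fin d → ℝ) :
    m (fun _ ↦ h) =
      ∑ r : Fin k → Fin d, m (fun j ↦ Pi.single (r j) 1) * ∏ i, h i ^ #{j | r j = i} := by
  conv_lhs => rw [pi_eq_sum_univ' h, m.map_sum]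
  simp only [m.map_smul_univ, smul_eq_mul, prod_comp_eq_prod_pow_card, mul_comm]

lemma abs_monomial_le (a : Fin d → ℕ) (h : Fin d → ℝ) :
    |∏ i, h i ^ a i| ≤ ‖h‖ ^ ∑ i, a i := by
  rw [abs_prod, ← prod_pow_eq_pow_sum]
  gcongr with i
  rw [abs_pow]
  exact pow_le_pow_left₀ (abs_nonneg _) (norm_le_pi_norm h i) _

variable {χ : (Fin d → ℝ) → ℝ} {L : ℕ}

lemma integral_multilinear_apply_const_mul_eq_zero
    (hχ : Integrable (fun h ↦ (1 + ‖h‖) ^ L * |χ h|) μ) (hχm : AEStronglyMeasurable χ μ)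
    {k : ℕ} (hkL : k ≤ L) (hmom : ∀ a : Fin d → ℕ, ∑ i, a i = k →
      ∫ h, (∏ i, h i ^ a i) * χ h ∂μ = 0)
    (m : ContinuousMultilinearMap ℝ (fun _ : Fin k ↦ Fin d → ℝ) ℝ) :
    ∫ h, m (fun _ ↦ h) * χ h ∂μ = 0 := by
  have hdeg (r : Fin k → Fin d) : ∑ i, #{j | r j = i} = k := by
    simp [← card_eq_sum_card_fiberwise fun j _ ↦ mem_univ (r j)]
  have hint (r : Fin k → Fin d) :
      Integrable (fun h ↦ (∏ i, h i ^ #{j | r j = i}) * χ h) μ :=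
    integrable_mul_of_abs_le_mul_one_add_norm_pow hχ hχm
      (by fun_prop : Continuous _).aestronglyMeasurable (C := 1) fun h ↦ by
        rw [one_mul]
        exact (abs_monomial_le _ h).trans
          (norm_pow_le_one_add_norm_pow h ((hdeg r).trans_le hkL))
  simp_rw [multilinear_apply_const_eq_sum_monomial m, sum_mul, mul_assoc]
  rw [integral_finsetSum _ fun r _ ↦ (hint r).const_mul _]
  refine sum_eq_zero fun r _ ↦ ?_
  rw [integral_const_mul, hmom _ (hdeg r), mul_zero]

theorem integral_taylorPolynomial_neg_mul {n : ℕ}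
    (hχ : Integrable (fun h ↦ (1 + ‖h‖) ^ (n + 1) * |χ h|) μ)
    (hχ1 : ∫ h, χ h ∂μ = 1)
    (hmom : ∀ a : Fin d → ℕ, 1 ≤ ∑ i, a i → ∑ i, a i ≤ n →
      ∫ h, (∏ i, h i ^ a i) * χ h ∂μ = 0)
    (f : (Fin d → ℝ) → ℝ) (x : Fin d → ℝ) :
    ∫ h, taylorPolynomial f x n (-h) * χ h ∂μ = f x := by
  have hχm : AEStronglyMeasurable χ μ :=
    (Integrable.of_integral_ne_zero (by simp [hχ1])).aestronglyMeasurable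
  have hvanish (k : ℕ) (hk : k ∈ range n) : ∫ h, ((k + 1)! : ℝ)⁻¹ *
      (iteratedFDeriv ℝ (k + 1) f x (fun _ ↦ -h) * χ h) ∂μ = 0 := by
    have hkn := mem_range.1 hk
    rw [integral_const_mul, mul_eq_zero_of_right]
    exact integral_multilinear_apply_const_mul_eq_zero hχ hχm (by omega : k + 1 ≤ n + 1)
      (fun a ha ↦ hmom a (by omega) (by omega))
      ((iteratedFDeriv ℝ (k + 1) f x).compContinuousLinearMap
        fun _ ↦ -ContinuousLinearMap.id ℝ _)
  simp_rw [taylorPolynomial, sum_mul, smul_eq_mul, mul_assoc]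
  rw [integral_finsetSum _ fun k hk ↦
      (integrable_iteratedFDeriv_apply_neg_mul hχ hχm f x (mem_range.1 hk).le).const_mul _,
    sum_range_succ', sum_eq_zero hvanish]
  simp [integral_const_mul, hχ1]

end Moments

lemma abs_integral_mul_sub_integral_mul_le {α : Type*} [MeasurableSpace α] {μ : Measure α}
    {χ g p w : α → ℝ} (hg : Integrable (fun a ↦ g a * χ a) μ)
    (hp : Integrable (fun a ↦ p a * χ a) μ) (hw : Integrable (fun a ↦ w a * χ a) μ)
    (hgp : ∀ a, |g a - p a| ≤ w a) :
    |∫ a, g a * χ a ∂μ - ∫ a, p a * χ a ∂μ| ≤ ∫ a, w a * |χ a| ∂μ := by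
  have hw_abs : ∀ a, |w a * χ a| = w a * |χ a| := fun a ↦ by
    rw [abs_mul, abs_of_nonneg ((abs_nonneg _).trans (hgp a))]
  rw [← integral_sub hg hp]
  refine abs_integral_le_integral_abs.trans <| integral_mono_of_nonneg
    (ae_of_all _ fun a ↦ abs_nonneg _) (by simpa only [hw_abs] using hw.abs)
    (ae_of_all _ fun a ↦ ?_)
  dsimp only
  rw [← sub_mul, abs_mul]
  exact mul_le_mul_of_nonneg_right (hgp a) (abs_nonneg _)

theorem mollification_error_general (d L : ℕ) (hL : 1 ≤ L)
    (χ : (Fin d → ℝ) → ℝ)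
    (hχint : Integrable (fun h : Fin d → ℝ => (1 + ‖h‖) ^ L * |χ h|))
    (hχ1 : (∫ h : Fin d → ℝ, χ h) = 1)
    (hmom : ∀ a : Fin d → ℕ, 1 ≤ (∑ i, a i) → (∑ i, a i) ≤ L - 1 →
      (∫ h : Fin d → ℝ, (∏ i, h i ^ a i) * χ h) = 0)
    (F : (Fin d → ℝ) → ℝ) (hF : ContDiff ℝ (L : ℕ∞) F)
    (hFbd : ∀ i : ℕ, i ≤ L → ∃ C : ℝ, ∀ x, ‖iteratedFDeriv ℝ i F x‖ ≤ C) :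
    ∀ x : Fin d → ℝ,
      |(∫ h : Fin d → ℝ, F (x - h) * χ h) - F x| ≤
        (1 / (Nat.factorial L : ℝ)) * (⨆ x : Fin d → ℝ, ‖iteratedFDeriv ℝ L F x‖) *
          ∫ h : Fin d → ℝ, ‖h‖ ^ L * |χ h| := by
  intro x
  obtain ⟨n, rfl⟩ := Nat.exists_eq_add_one.mpr hL
  have hχ : Integrable χ := .of_integral_ne_zero (by simp [hχ1])
  obtain ⟨C₀, hC₀⟩ := hFbd 0 (Nat.zero_le _)
  obtain ⟨C, hC⟩ := hFbd (n + 1) le_rfl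
  set M := ⨆ y, ‖iteratedFDeriv ℝ (n + 1) F y‖
  have hM : ∀ y, ‖iteratedFDeriv ℝ (n + 1) F y‖ ≤ M := le_ciSup ⟨C, Set.forall_mem_range.2 hC⟩
  have hFχ : Integrable (fun h ↦ F (x - h) * χ h) :=
    hχ.bdd_mul (by fun_prop) (ae_of_all _ fun h ↦ by simpa using hC₀ (x - h))
  have hmoment : Integrable (fun h ↦ ‖h‖ ^ (n + 1) * χ h) :=
    integrable_mul_of_abs_le_mul_one_add_norm_pow hχint hχ.aestronglyMeasurable
      (by fun_prop : Continuous _).aestronglyMeasurable (C := 1) fun h ↦ by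
        simpa using norm_pow_le_one_add_norm_pow h le_rfl
  have hweight : Integrable (fun h ↦ M / (n + 1)! * ‖h‖ ^ (n + 1) * χ h) := by
    simpa only [mul_assoc] using hmoment.const_mul (M / (n + 1)!)
  have hremainder (h : Fin d → ℝ) :
      |F (x - h) - taylorPolynomial F x n (-h)| ≤ M / (n + 1)! * ‖h‖ ^ (n + 1) := by
    simpa [sub_eq_add_neg, mul_div_right_comm] using
      norm_sub_taylorPolynomial_le (by exact_mod_cast hF) hM x (-h)
  calc |(∫ h, F (x - h) * χ h) - F x|
      = |(∫ h, F (x - h) * χ h) - ∫ h, taylorPolynomial F x n (-h) * χ h| := by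
        rw [integral_taylorPolynomial_neg_mul hχint hχ1 (by simpa using hmom)]
    _ ≤ ∫ h, M / (n + 1)! * ‖h‖ ^ (n + 1) * |χ h| :=
        abs_integral_mul_sub_integral_mul_le hFχ
          (integrable_taylorPolynomial_neg_mul hχint hχ.aestronglyMeasurable F x)
          hweight hremainder
    _ = _ := by
        simp_rw [mul_assoc]
        rw [integral_const_mul]
        ring

/-- Mollification error estimate: if `χ` has integral `1`, finite `L`-th
weighted moment, and vanishing moments of orders `1, …, L−1`, then for every bounded `C^L`
function `F` with bounded derivatives,
`‖χ ∗ F − F‖_{C⁰} ≤ (1/L!)·sup‖D^L F‖·∫ |h|^L |χ(h)| dh`. -/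
theorem mollification_error (d L : ℕ) (hd : 1 ≤ d) (hL : 1 ≤ L)
    (χ : (Fin d → ℝ) → ℝ) (hχm : Measurable χ)
    (hχint : Integrable (fun h : Fin d → ℝ => (1 + ‖h‖) ^ L * |χ h|))
    (hχ1 : (∫ h : Fin d → ℝ, χ h) = 1)
    (hmom : ∀ a : Fin d → ℕ, 1 ≤ (∑ i, a i) → (∑ i, a i) ≤ L - 1 →
      (∫ h : Fin d → ℝ, (∏ i, h i ^ a i) * χ h) = 0)
    (F : (Fin d → ℝ) → ℝ) (hF : ContDiff ℝ (L : ℕ∞) F)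
    (hFbd : ∀ i : ℕ, i ≤ L → ∃ C : ℝ, ∀ x, ‖iteratedFDeriv ℝ i F x‖ ≤ C) :
    ∀ x : Fin d → ℝ,
      |(∫ h : Fin d → ℝ, F (x - h) * χ h) - F x| ≤
        (1 / (Nat.factorial L : ℝ)) * (⨆ x : Fin d → ℝ, ‖iteratedFDeriv ℝ L F x‖) *
          ∫ h : Fin d → ℝ, ‖h‖ ^ L * |χ h| :=
  mollification_error_general d L hL χ hχint hχ1 hmom F hF hFbd
end

section
/- Let d ≥ 1. Let v : ℝ^d → ℝ^d be of class C¹ with div v = 0 and sup_x ‖Dv(x)‖ < ∞; let U : ℝ^d → ℝ be of class C¹ with U and ∇U bounded; and let Q : ℝ^d → ℝ be a Schwartz function. Then for every x ∈ ℝ^d, | v(x)·∇(Q ∗ U)(x) − ( Q ∗ (v·∇U) )(x) | ≤ ( sup_y ‖Dv(y)‖ ) · ( sup_y |U(y)| ) · ∫_{ℝ^d} |h| |∇Q(h)| dh. -/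
/-!
Differentiating under the integral, `v(x)·∇(Q∗U)(x) = ∫ DU(x-h)(v x) Q(h) dh`, so the commutator
is `∫ DU(x-h)(v x - v(x-h)) Q(h) dh`. The field `h ↦ v x - v(x-h)` is again divergence free, so
integrating by parts moves the derivative from `U` onto `Q` without producing a divergence term:
the commutator equals `∫ U(x-h) DQ(h)(v x - v(x-h)) dh`, and the mean value bound
`‖v x - v(x-h)‖ ≤ sup ‖Dv‖ · ‖h‖` finishes the estimate.
-/

open MeasureTheory

theorem fderiv_comp_const_sub {E F : Type*} [NormedAddCommGroup E] [NormedSpace ℝ E]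
    [NormedAddCommGroup F] [NormedSpace ℝ F] {f : E → F} {a x : E}
    (hf : DifferentiableAt ℝ f (a - x)) :
    fderiv ℝ (fun y => f (a - y)) x = -fderiv ℝ f (a - x) := by
  refine (hf.hasFDerivAt.comp x ((hasFDerivAt_id x).const_sub a)).fderiv.trans ?_
  ext; simp

theorem norm_fderiv_smul_le {E F : Type*} [NormedAddCommGroup E] [NormedSpace ℝ E]
    [NormedAddCommGroup F] [NormedSpace ℝ F] {f : E → ℝ} {W : E → F} {x : E}
    (hf : DifferentiableAt ℝ f x) (hW : DifferentiableAt ℝ W x) :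
    ‖fderiv ℝ (fun y => f y • W y) x‖ ≤ ‖fderiv ℝ f x‖ * ‖W x‖ + ‖f x‖ * ‖fderiv ℝ W x‖ := by
  rw [fderiv_fun_smul hf hW, add_comm (_ * _)]
  refine (norm_add_le _ _).trans_eq ?_
  rw [norm_smul, ContinuousLinearMap.norm_smulRight_apply]

theorem norm_sub_le_of_norm_fderiv_le {E F : Type*} [NormedAddCommGroup E] [NormedSpace ℝ E]
    [NormedAddCommGroup F] [NormedSpace ℝ F] {f : E → F} {C : ℝ} (hf : Differentiable ℝ f)
    (hC : ∀ x, ‖fderiv ℝ f x‖ ≤ C) (a b : E) : ‖f a - f b‖ ≤ C * ‖a - b‖ :=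
  convex_univ.norm_image_sub_le_of_norm_fderiv_le (fun x _ => hf x) (fun x _ => hC x)
    (Set.mem_univ b) (Set.mem_univ a)

section Divergence

variable {ι : Type*} [Fintype ι] [DecidableEq ι]

theorem ContinuousLinearMap.apply_eq_sum_mul_apply_single (L : (ι → ℝ) →L[ℝ] ℝ) (w : ι → ℝ) :
    L w = ∑ i, w i * L (Pi.single i 1) := by
  conv_lhs => rw [pi_eq_sum_univ' w]
  simp [map_sum, map_smul]

theorem ContinuousLinearMap.norm_apply_single_le {F : Type*} [NormedAddCommGroup F]
    [NormedSpace ℝ F] (L : (ι → ℝ) →L[ℝ] F) (i : ι) : ‖L (Pi.single i 1)‖ ≤ ‖L‖ :=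
  (L.le_opNorm _).trans_eq (by rw [Pi.norm_single, norm_one, mul_one])

noncomputable def divergence (Φ : (ι → ℝ) → ι → ℝ) (x : ι → ℝ) : ℝ :=
  ∑ i, fderiv ℝ Φ x (Pi.single i 1) i

theorem divergence_smul {f : (ι → ℝ) → ℝ} {W : (ι → ℝ) → ι → ℝ} {x : ι → ℝ}
    (hf : DifferentiableAt ℝ f x) (hW : DifferentiableAt ℝ W x) :
    divergence (fun y => f y • W y) x = fderiv ℝ f x (W x) + f x * divergence W x := by
  simp only [divergence, fderiv_fun_smul hf hW, add_apply, FunLike.coe_smul,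
    ContinuousLinearMap.smulRight_apply, Pi.add_apply, Pi.smul_apply, smul_eq_mul,
    Finset.sum_add_distrib, ← Finset.mul_sum, (fderiv ℝ f x).apply_eq_sum_mul_apply_single (W x)]
  rw [add_comm]
  congr 1
  exact Finset.sum_congr rfl fun i _ => mul_comm _ _

variable {μ : Measure (ι → ℝ)} [μ.IsAddHaarMeasure]

theorem integral_fderiv_apply_eq_neg_integral_divergence_mul {Φ : (ι → ℝ) → ι → ℝ}
    {g : (ι → ℝ) → ℝ} (hΦ : Differentiable ℝ Φ) (hg : Differentiable ℝ g)
    (hΦg' : Integrable (fun y => ‖Φ y‖ * ‖fderiv ℝ g y‖) μ)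
    (hΦ'g : Integrable (fun y => ‖fderiv ℝ Φ y‖ * ‖g y‖) μ)
    (hΦg : Integrable (fun y => ‖Φ y‖ * ‖g y‖) μ) :
    ∫ y, fderiv ℝ g y (Φ y) ∂μ = -∫ y, divergence Φ y * g y ∂μ := by
  have hΦi (i : ι) : Differentiable ℝ (fun y => Φ y i) := differentiable_pi.1 hΦ i
  have hfderiv (i : ι) (y : ι → ℝ) :
      fderiv ℝ (fun y => Φ y i) y (Pi.single i 1) = fderiv ℝ Φ y (Pi.single i 1) i := by
    rw [fderiv_apply (hΦ y)]; rfl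
  have hcoord (i : ι) (y : ι → ℝ) : ‖Φ y i‖ ≤ ‖Φ y‖ := norm_le_pi_norm _ i
  have hΦg'_i (i : ι) : Integrable (fun y => Φ y i * fderiv ℝ g y (Pi.single i 1)) μ := by
    refine hΦg'.mono' (((hΦi i).continuous.measurable).mul
      (measurable_fderiv_apply_const ℝ g _)).aestronglyMeasurable (.of_forall fun y => ?_)
    rw [norm_mul]
    gcongr
    · exact hcoord i y
    · exact (fderiv ℝ g y).norm_apply_single_le i
  have hΦ'g_i (i : ι) : Integrable (fun y => fderiv ℝ Φ y (Pi.single i 1) i * g y) μ := by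
    refine hΦ'g.mono' (((measurable_pi_apply i).comp (measurable_fderiv_apply_const ℝ Φ _)).mul
      hg.continuous.measurable).aestronglyMeasurable (.of_forall fun y => ?_)
    rw [norm_mul]
    gcongr
    exact (norm_le_pi_norm _ i).trans ((fderiv ℝ Φ y).norm_apply_single_le i)
  have hΦg_i (i : ι) : Integrable (fun y => Φ y i * g y) μ := by
    refine hΦg.mono' ((hΦi i).continuous.mul hg.continuous).aestronglyMeasurable
      (.of_forall fun y => ?_)
    rw [norm_mul]
    gcongr
    exact hcoord i y
  have hibp (i : ι) : ∫ y, Φ y i * fderiv ℝ g y (Pi.single i 1) ∂μ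
      = -∫ y, fderiv ℝ Φ y (Pi.single i 1) i * g y ∂μ := by
    simp_rw [← hfderiv]
    refine integral_mul_fderiv_eq_neg_fderiv_mul_of_integrable ?_ (hΦg'_i i) (hΦg_i i)
      (fun y _ => hΦi i y) (fun y _ => hg y)
    simpa only [hfderiv] using hΦ'g_i i
  calc ∫ y, fderiv ℝ g y (Φ y) ∂μ
      = ∫ y, ∑ i, Φ y i * fderiv ℝ g y (Pi.single i 1) ∂μ := by
        simp_rw [← ContinuousLinearMap.apply_eq_sum_mul_apply_single]
    _ = ∑ i, -∫ y, fderiv ℝ Φ y (Pi.single i 1) i * g y ∂μ := by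
        rw [integral_finsetSum _ fun i _ => hΦg'_i i]
        exact Finset.sum_congr rfl fun i _ => hibp i
    _ = -∫ y, divergence Φ y * g y ∂μ := by
        simp_rw [divergence, Finset.sum_mul]
        rw [integral_finsetSum _ fun i _ => hΦ'g_i i, Finset.sum_neg_distrib]

theorem integral_mul_fderiv_apply_eq_neg_of_divergence_eq_zero {f g : (ι → ℝ) → ℝ}
    {W : (ι → ℝ) → ι → ℝ} (hf : Differentiable ℝ f) (hg : Differentiable ℝ g)
    (hW : Differentiable ℝ W) (hdiv : ∀ y, divergence W y = 0)
    (hfWg' : Integrable (fun y => ‖f y‖ * ‖W y‖ * ‖fderiv ℝ g y‖) μ)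
    (hfWg : Integrable (fun y => (‖fderiv ℝ f y‖ * ‖W y‖ + ‖f y‖ * ‖fderiv ℝ W y‖) * ‖g y‖) μ)
    (hfWg₀ : Integrable (fun y => ‖f y‖ * ‖W y‖ * ‖g y‖) μ) :
    ∫ y, f y * fderiv ℝ g y (W y) ∂μ = -∫ y, fderiv ℝ f y (W y) * g y ∂μ := by
  have hfW : Differentiable ℝ (fun y => f y • W y) := hf.smul hW
  have hΦ'g : Integrable (fun y => ‖fderiv ℝ (fun y => f y • W y) y‖ * ‖g y‖) μ := by
    refine hfWg.mono' ((measurable_fderiv ℝ _).norm.mul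
      hg.continuous.measurable.norm).aestronglyMeasurable (.of_forall fun y => ?_)
    rw [norm_mul, norm_norm, norm_norm]
    gcongr
    exact norm_fderiv_smul_le (hf y) (hW y)
  have := integral_fderiv_apply_eq_neg_integral_divergence_mul hfW hg
    (by simpa only [norm_smul, norm_norm] using hfWg') hΦ'g
    (by simpa only [norm_smul, norm_norm] using hfWg₀)
  simp only [map_smul, smul_eq_mul, divergence_smul (hf _) (hW _), hdiv, mul_zero,
    add_zero] at this
  exact this

end Divergence

theorem SchwartzMap.integrable_of_norm_le_affine_mul {D V G : Type*} [NormedAddCommGroup D]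
    [NormedSpace ℝ D] [NormedAddCommGroup V] [NormedSpace ℝ V] [NormedAddCommGroup G]
    [MeasurableSpace D] [BorelSpace D] [SecondCountableTopology D] {μ : Measure D}
    [μ.HasTemperateGrowth] (φ : SchwartzMap D V) {F : D → G} (hF : AEStronglyMeasurable F μ)
    (A B : ℝ) (hbd : ∀ x, ‖F x‖ ≤ (A + B * ‖x‖) * ‖φ x‖) : Integrable F μ := by
  refine (((φ.integrable_pow_mul μ 0).const_mul A).add
    ((φ.integrable_pow_mul μ 1).const_mul B)).mono' hF (.of_forall fun x => ?_)
  simpa [add_mul, mul_assoc] using hbd x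

theorem fderiv_integral_comp_sub_mul_apply {E : Type*} [NormedAddCommGroup E]
    [NormedSpace ℝ E] [FiniteDimensional ℝ E] [MeasurableSpace E] [BorelSpace E]
    {μ : Measure E} {U Q : E → ℝ} {CU CDU : ℝ} (hU : Differentiable ℝ U)
    (hUbd : ∀ y, |U y| ≤ CU) (hDU : ∀ y, ‖fderiv ℝ U y‖ ≤ CDU) (hQ : Integrable Q μ)
    (x u : E) :
    fderiv ℝ (fun y => ∫ h, U (y - h) * Q h ∂μ) x u = ∫ h, fderiv ℝ U (x - h) u * Q h ∂μ := by
  have hF'_bd (y h : E) : ‖Q h • fderiv ℝ U (y - h)‖ ≤ ‖Q h‖ * CDU := by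
    rw [norm_smul]; gcongr; exact hDU _
  have hF'_meas (y : E) : AEStronglyMeasurable (fun h => Q h • fderiv ℝ U (y - h)) μ :=
    hQ.aestronglyMeasurable.smul
      ((measurable_fderiv ℝ U).comp (measurable_const.sub measurable_id)).aestronglyMeasurable
  have hderiv : HasFDerivAt (fun y => ∫ h, U (y - h) * Q h ∂μ)
      (∫ h, Q h • fderiv ℝ U (x - h) ∂μ) x := by
    refine hasFDerivAt_integral_of_dominated_of_fderiv_le (Metric.ball_mem_nhds x one_pos)
      (.of_forall fun y => ?_) ?_ (hF'_meas x) (.of_forall fun h y _ => hF'_bd y h)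
      (hQ.norm.mul_const CDU) (.of_forall fun h y _ => ?_)
    · exact (hU.continuous.comp (continuous_const.sub continuous_id)).aestronglyMeasurable.mul
        hQ.aestronglyMeasurable
    · exact hQ.bdd_mul (c := CU)
        (hU.continuous.comp (continuous_const.sub continuous_id)).aestronglyMeasurable
        (.of_forall fun h => hUbd _)
    · exact ((hU _).hasFDerivAt.comp y ((hasFDerivAt_id y).sub_const h)).mul_const (Q h)
  rw [hderiv.fderiv, ContinuousLinearMap.integral_apply
    ((hQ.norm.mul_const CDU).mono' (hF'_meas x) (.of_forall (hF'_bd x)))]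
  simp only [FunLike.coe_smul, Pi.smul_apply, smul_eq_mul, mul_comm]

section Commutator

variable {ι : Type*} [Fintype ι] [DecidableEq ι] {μ : Measure (ι → ℝ)} [μ.IsAddHaarMeasure]
  {U : (ι → ℝ) → ℝ} {v : (ι → ℝ) → ι → ℝ} {CU CDU Cv : ℝ}

theorem integral_fderiv_apply_sub_mul_eq_integral_mul_fderiv_apply_sub (hU : Differentiable ℝ U)
    (hUbd : ∀ y, |U y| ≤ CU) (hDU : ∀ y, ‖fderiv ℝ U y‖ ≤ CDU) (hv : Differentiable ℝ v)
    (hdiv : ∀ y, divergence v y = 0) (hDv : ∀ y, ‖fderiv ℝ v y‖ ≤ Cv)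
    (Q : SchwartzMap (ι → ℝ) ℝ) (x : ι → ℝ) :
    ∫ h, fderiv ℝ U (x - h) (v x - v (x - h)) * Q h ∂μ
      = ∫ h, U (x - h) * fderiv ℝ Q h (v x - v (x - h)) ∂μ := by
  set f : (ι → ℝ) → ℝ := fun h => U (x - h)
  set W : (ι → ℝ) → ι → ℝ := fun h => v x - v (x - h)
  have hf : Differentiable ℝ f := hU.comp (differentiable_const x |>.sub differentiable_id)
  have hW : Differentiable ℝ W :=
    (differentiable_const _).sub (hv.comp (differentiable_const x |>.sub differentiable_id))
  have hf' (h : ι → ℝ) : fderiv ℝ f h = -fderiv ℝ U (x - h) := fderiv_comp_const_sub (hU _)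
  have hW' (h : ι → ℝ) : fderiv ℝ W h = fderiv ℝ v (x - h) := by
    rw [fderiv_const_sub, fderiv_comp_const_sub (hv _), neg_neg]
  have hWdiv (h : ι → ℝ) : divergence W h = 0 := by
    rw [← hdiv (x - h)]; simp only [divergence, hW']
  have hCU : 0 ≤ CU := (abs_nonneg _).trans (hUbd 0)
  have hCv : 0 ≤ Cv := (norm_nonneg _).trans (hDv 0)
  have hfle (h : ι → ℝ) : ‖f h‖ ≤ CU := hUbd _
  have hWle (h : ι → ℝ) : ‖W h‖ ≤ Cv * ‖h‖ := by
    simpa using norm_sub_le_of_norm_fderiv_le hv hDv x (x - h)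
  have hUcont := hU.continuous
  have hvcont := hv.continuous
  have key := integral_mul_fderiv_apply_eq_neg_of_divergence_eq_zero (μ := μ) hf
    Q.differentiable hW hWdiv ?_ ?_ ?_
  · simpa only [hf', neg_apply, neg_mul, integral_neg, neg_neg] using key.symm
  · refine (SchwartzMap.fderivCLM ℝ _ ℝ Q).integrable_of_norm_le_affine_mul (by fun_prop) 0
      (CU * Cv) fun h => ?_
    rw [SchwartzMap.fderivCLM_apply, Real.norm_of_nonneg (by positivity)]
    calc _ ≤ CU * (Cv * ‖h‖) * ‖fderiv ℝ Q h‖ := by gcongr; exacts [hfle h, hWle h]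
      _ = _ := by ring
  · refine Q.integrable_of_norm_le_affine_mul (by fun_prop) (CU * Cv) (CDU * Cv) fun h => ?_
    rw [Real.norm_of_nonneg (by positivity), hf', hW', norm_neg]
    have hCDU : 0 ≤ CDU := (norm_nonneg _).trans (hDU 0)
    calc _ ≤ (CDU * (Cv * ‖h‖) + CU * Cv) * ‖Q h‖ := by
          gcongr; exacts [hDU _, hWle h, hfle h, hDv _]
      _ = _ := by ring
  · refine Q.integrable_of_norm_le_affine_mul (by fun_prop) 0 (CU * Cv) fun h => ?_
    rw [Real.norm_of_nonneg (by positivity)]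
    calc _ ≤ CU * (Cv * ‖h‖) * ‖Q h‖ := by gcongr; exacts [hfle h, hWle h]
      _ = _ := by ring

theorem integral_fderiv_apply_mul_sub_integral_fderiv_apply_mul (hU : Differentiable ℝ U)
    (hUbd : ∀ y, |U y| ≤ CU) (hDU : ∀ y, ‖fderiv ℝ U y‖ ≤ CDU) (hv : Differentiable ℝ v)
    (hdiv : ∀ y, divergence v y = 0) (hDv : ∀ y, ‖fderiv ℝ v y‖ ≤ Cv)
    (Q : SchwartzMap (ι → ℝ) ℝ) (x : ι → ℝ) :
    (∫ h, fderiv ℝ U (x - h) (v x) * Q h ∂μ) - ∫ h, fderiv ℝ U (x - h) (v (x - h)) * Q h ∂μ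
      = ∫ h, U (x - h) * fderiv ℝ Q h (v x - v (x - h)) ∂μ := by
  have hCDU : 0 ≤ CDU := (norm_nonneg _).trans (hDU 0)
  have hvcont := hv.continuous
  have hint (w : (ι → ℝ) → ι → ℝ) (hw : Continuous w) (A B : ℝ)
      (hwle : ∀ h, ‖w h‖ ≤ A + B * ‖h‖) :
      Integrable (fun h => fderiv ℝ U (x - h) (w h) * Q h) μ := by
    have hmeas : Measurable fun h => fderiv ℝ U (x - h) (w h) :=
      isBoundedBilinearMap_apply.continuous.measurable.comp
        (((measurable_fderiv ℝ U).comp (measurable_const.sub measurable_id)).prodMk hw.measurable)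
    refine Q.integrable_of_norm_le_affine_mul (hmeas.aestronglyMeasurable.mul (by fun_prop))
      (CDU * A) (CDU * B) fun h => ?_
    rw [norm_mul]
    gcongr
    calc _ ≤ ‖fderiv ℝ U (x - h)‖ * ‖w h‖ := (fderiv ℝ U (x - h)).le_opNorm _
      _ ≤ CDU * (A + B * ‖h‖) := by gcongr; exacts [hDU _, hwle h]
      _ = _ := by ring
  rw [← integral_sub (hint _ continuous_const ‖v x‖ 0 fun h => by simp)
    (hint _ (by fun_prop) ‖v x‖ Cv fun h => ?_)]
  · simp_rw [← sub_mul, ← map_sub]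
    exact integral_fderiv_apply_sub_mul_eq_integral_mul_fderiv_apply_sub hU hUbd hDU hv hdiv hDv
      Q x
  · calc ‖v (x - h)‖ ≤ ‖v x‖ + ‖v x - v (x - h)‖ := norm_le_insert _ _
      _ ≤ ‖v x‖ + Cv * ‖h‖ := by
        simpa using norm_sub_le_of_norm_fderiv_le hv hDv x (x - h)

end Commutator

theorem abs_integral_mul_fderiv_apply_sub_le {E : Type*} [NormedAddCommGroup E]
    [NormedSpace ℝ E] [MeasurableSpace E] {μ : Measure E} {U Q : E → ℝ} {v : E → E}
    {CU Cv : ℝ} (hUbd : ∀ y, |U y| ≤ CU) (hv : ∀ a b, ‖v a - v b‖ ≤ Cv * ‖a - b‖)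
    (hQ : Integrable (fun h => ‖h‖ * ‖fderiv ℝ Q h‖) μ) (x : E) :
    |∫ h, U (x - h) * fderiv ℝ Q h (v x - v (x - h)) ∂μ|
      ≤ Cv * CU * ∫ h, ‖h‖ * ‖fderiv ℝ Q h‖ ∂μ := by
  have hCU : 0 ≤ CU := (abs_nonneg _).trans (hUbd x)
  rw [← integral_const_mul, ← Real.norm_eq_abs]
  refine norm_integral_le_of_norm_le (hQ.const_mul _) (.of_forall fun h => ?_)
  rw [norm_mul, Real.norm_eq_abs]
  calc _ ≤ CU * (‖fderiv ℝ Q h‖ * (Cv * ‖h‖)) := by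
        gcongr
        · exact hUbd _
        · refine ((fderiv ℝ Q h).le_opNorm _).trans ?_
          gcongr
          simpa using hv x (x - h)
    _ = _ := by ring

theorem schwartz_commutator_estimate_general (d : ℕ)
    (v : (Fin d → ℝ) → Fin d → ℝ) (hv : ContDiff ℝ 1 v)
    (hdiv : ∀ x : Fin d → ℝ, (∑ i, fderiv ℝ v x (Pi.single i 1) i) = 0)
    (hDv : ∃ C : ℝ, ∀ x, ‖fderiv ℝ v x‖ ≤ C)
    (U : (Fin d → ℝ) → ℝ) (hU : ContDiff ℝ 1 U)
    (hUbd : ∃ C : ℝ, ∀ x, |U x| ≤ C)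
    (hDU : ∃ C : ℝ, ∀ x, ‖fderiv ℝ U x‖ ≤ C)
    (Q : SchwartzMap (Fin d → ℝ) ℝ) :
    ∀ x : Fin d → ℝ,
      |fderiv ℝ (fun y => ∫ h : Fin d → ℝ, U (y - h) * Q h) x (v x) -
          ∫ h : Fin d → ℝ, fderiv ℝ U (x - h) (v (x - h)) * Q h| ≤
        (⨆ y : Fin d → ℝ, ‖fderiv ℝ v y‖) * (⨆ y : Fin d → ℝ, |U y|) *
          ∫ h : Fin d → ℝ, ‖h‖ * ‖fderiv ℝ (⇑Q) h‖ := by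
  intro x
  obtain ⟨Cv, hCv⟩ := hDv
  obtain ⟨CU, hCU⟩ := hUbd
  obtain ⟨CDU, hCDU⟩ := hDU
  have hDv_le (y : Fin d → ℝ) : ‖fderiv ℝ v y‖ ≤ ⨆ y, ‖fderiv ℝ v y‖ :=
    le_ciSup ⟨Cv, Set.forall_mem_range.2 hCv⟩ y
  have hU_le (y : Fin d → ℝ) : |U y| ≤ ⨆ y, |U y| := le_ciSup ⟨CU, Set.forall_mem_range.2 hCU⟩ y
  have hU1 := hU.differentiable one_ne_zero
  have hv1 := hv.differentiable one_ne_zero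
  rw [fderiv_integral_comp_sub_mul_apply hU1 hU_le hCDU Q.integrable,
    integral_fderiv_apply_mul_sub_integral_fderiv_apply_mul hU1 hU_le hCDU hv1 hdiv hDv_le]
  exact abs_integral_mul_fderiv_apply_sub_le hU_le (norm_sub_le_of_norm_fderiv_le hv1 hDv_le)
    (by simpa using (SchwartzMap.fderivCLM ℝ _ ℝ Q).integrable_pow_mul volume 1) x

/-- Commutator estimate for a frequency-localized solution operator: for a
divergence-free `C¹` field `v` with bounded derivative, a bounded `C¹` function `U` with
bounded gradient, and a Schwartz kernel `Q`,
`|v·∇(Q∗U)(x) − (Q∗(v·∇U))(x)| ≤ sup‖Dv‖ · sup|U| · ∫ |h| |∇Q(h)| dh`. -/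
theorem schwartz_commutator_estimate (d : ℕ) (hd : 1 ≤ d)
    (v : (Fin d → ℝ) → Fin d → ℝ) (hv : ContDiff ℝ 1 v)
    (hdiv : ∀ x : Fin d → ℝ, (∑ i, fderiv ℝ v x (Pi.single i 1) i) = 0)
    (hDv : ∃ C : ℝ, ∀ x, ‖fderiv ℝ v x‖ ≤ C)
    (U : (Fin d → ℝ) → ℝ) (hU : ContDiff ℝ 1 U)
    (hUbd : ∃ C : ℝ, ∀ x, |U x| ≤ C)
    (hDU : ∃ C : ℝ, ∀ x, ‖fderiv ℝ U x‖ ≤ C)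
    (Q : SchwartzMap (Fin d → ℝ) ℝ) :
    ∀ x : Fin d → ℝ,
      |fderiv ℝ (fun y => ∫ h : Fin d → ℝ, U (y - h) * Q h) x (v x) -
          ∫ h : Fin d → ℝ, fderiv ℝ U (x - h) (v (x - h)) * Q h| ≤
        (⨆ y : Fin d → ℝ, ‖fderiv ℝ v y‖) * (⨆ y : Fin d → ℝ, |U y|) *
          ∫ h : Fin d → ℝ, ‖h‖ * ‖fderiv ℝ (⇑Q) h‖ :=
  schwartz_commutator_estimate_general d v hv hdiv hDv U hU hUbd hDU Q
end

section
/- There exist vectors f₁, f₂, f₃ ∈ ℝ³, each with first coordinate zero, and vectors g₁, g₂, g₃ ∈ ℝ³, each with second coordinate zero, such that: (i) the three symmetric matrices f₁f₁ᵀ, f₂f₂ᵀ, f₃f₃ᵀ are linearly independent in the space of 3×3 matrices (hence span the 3-dimensional space of symmetric matrices whose first row and first column vanish); (ii) the three matrices g₁g₁ᵀ, g₂g₂ᵀ, g₃g₃ᵀ are linearly independent (hence span the symmetric matrices whose second row and column vanish); (iii) f₁f₁ᵀ + f₂f₂ᵀ + f₃f₃ᵀ = e₂e₂ᵀ + (1/2)e₃e₃ᵀ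 and g₁g₁ᵀ + g₂g₂ᵀ + g₃g₃ᵀ = e₁e₁ᵀ + (1/2)e₃e₃ᵀ; consequently Σᵢ fᵢfᵢᵀ + Σⱼ gⱼgⱼᵀ equals the 3×3 identity matrix. -/
set_option maxHeartbeats 2000000 in
/-- There exist three vectors in `ker dx¹ ⊆ ℝ³` and three vectors in
`ker dx² ⊆ ℝ³` whose rank-one squares are linearly independent, sum respectively to
`e₂e₂ᵀ + ½e₃e₃ᵀ` and `e₁e₁ᵀ + ½e₃e₃ᵀ`, and together sum to the identity matrix. -/
theorem basis_decomposition_of_identity :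
    ∃ f₁ f₂ f₃ g₁ g₂ g₃ : Fin 3 → ℝ,
      f₁ 0 = 0 ∧ f₂ 0 = 0 ∧ f₃ 0 = 0 ∧
      g₁ 1 = 0 ∧ g₂ 1 = 0 ∧ g₃ 1 = 0 ∧
      LinearIndependent ℝ
        ![Matrix.vecMulVec f₁ f₁, Matrix.vecMulVec f₂ f₂, Matrix.vecMulVec f₃ f₃] ∧
      LinearIndependent ℝ
        ![Matrix.vecMulVec g₁ g₁, Matrix.vecMulVec g₂ g₂, Matrix.vecMulVec g₃ g₃] ∧
      Matrix.vecMulVec f₁ f₁ + Matrix.vecMulVec f₂ f₂ + Matrix.vecMulVec f₃ f₃ =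
        Matrix.vecMulVec (Pi.single 1 1 : Fin 3 → ℝ) (Pi.single 1 1 : Fin 3 → ℝ) +
          (1 / 2 : ℝ) •
            Matrix.vecMulVec (Pi.single 2 1 : Fin 3 → ℝ) (Pi.single 2 1 : Fin 3 → ℝ) ∧
      Matrix.vecMulVec g₁ g₁ + Matrix.vecMulVec g₂ g₂ + Matrix.vecMulVec g₃ g₃ =
        Matrix.vecMulVec (Pi.single 0 1 : Fin 3 → ℝ) (Pi.single 0 1 : Fin 3 → ℝ) +
          (1 / 2 : ℝ) •
            Matrix.vecMulVec (Pi.single 2 1 : Fin 3 → ℝ) (Pi.single 2 1 : Fin 3 → ℝ) ∧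
      (Matrix.vecMulVec f₁ f₁ + Matrix.vecMulVec f₂ f₂ + Matrix.vecMulVec f₃ f₃) +
        (Matrix.vecMulVec g₁ g₁ + Matrix.vecMulVec g₂ g₂ + Matrix.vecMulVec g₃ g₃) =
          (1 : Matrix (Fin 3) (Fin 3) ℝ) := by
  refine ⟨![0, 2/3, 1/2], ![0, 2/3, -(1/2)], ![0, 1/3, 0],
    ![2/3, 0, 1/2], ![2/3, 0, -(1/2)], ![1/3, 0, 0],
    rfl, rfl, rfl, rfl, rfl, rfl, ?_, ?_, ?_, ?_, ?_⟩
  · rw [Fintype.linearIndependent_iff]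
    intro c hc i
    simp only [Fin.sum_univ_three, Matrix.cons_val_zero, Matrix.cons_val_one,
      Matrix.head_cons, Matrix.cons_val_two, Matrix.tail_cons] at hc
    have h12 := congrFun (congrFun hc 1) 2
    have h22 := congrFun (congrFun hc 2) 2
    have h11 := congrFun (congrFun hc 1) 1
    simp [Matrix.add_apply, Matrix.smul_apply, Matrix.vecMulVec_apply,
      Matrix.zero_apply, smul_eq_mul] at h12 h22 h11
    norm_num at h12 h22 h11
    fin_cases i <;> simp <;> linarith
  · rw [Fintype.linearIndependent_iff]
    intro c hc i
    simp only [Fin.sum_univ_three, Matrix.cons_val_zero, Matrix.cons_val_one,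
      Matrix.head_cons, Matrix.cons_val_two, Matrix.tail_cons] at hc
    have h12 := congrFun (congrFun hc 0) 2
    have h22 := congrFun (congrFun hc 2) 2
    have h11 := congrFun (congrFun hc 0) 0
    simp [Matrix.add_apply, Matrix.smul_apply, Matrix.vecMulVec_apply,
      Matrix.zero_apply, smul_eq_mul] at h12 h22 h11
    norm_num at h12 h22 h11
    fin_cases i <;> simp <;> linarith
  · ext i j
    fin_cases i <;> fin_cases j <;>
      simp [Matrix.vecMulVec_apply, Pi.single_apply] <;> norm_num
  · ext i j
    fin_cases i <;> fin_cases j <;>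
      simp [Matrix.vecMulVec_apply, Pi.single_apply] <;> norm_num
  · ext i j
    fin_cases i <;> fin_cases j <;>
      simp [Matrix.vecMulVec_apply, Matrix.one_apply, Fin.ext_iff] <;> norm_num
end
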